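/- Converse of the optimality statement: any selection rule S | x, y that achieves the global maximum of I(X_S; Y) - I(X_{\bar S}; Y) must, with probability one over p(x, y), assign all its probability mass to the set of pointwise maximizers S*(x, y) of E_{y|x_S, x_{\bar S}}[log p(y | x_S) - log p(y | x_{\bar S})]. -/

import Mathlib

/-! Each π-average of `f x y` is at most `f x y (Sstar x y)`, so the optimal value is a
`p`-weighted sum of nonpositive gaps that vanishes: every gap with `p x y > 0` is zero, and a
weighted average reaching its maximum puts no weight where `f` falls short of it. -/

open Finset

section WeightedAverage

variable {ι R : Type*} [Fintype ι] [CommRing R] [LinearOrder R] [IsStrictOrderedRing R]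
  {w g : ι → R} {M : R}

theorem weighted_sum_le_of_le (hw : ∀ i, 0 ≤ w i) (hw1 : ∑ i, w i = 1) (hg : ∀ i, g i ≤ M) :
    ∑ i, w i * g i ≤ M :=
  calc ∑ i, w i * g i ≤ ∑ i, w i * M :=
        sum_le_sum fun i _ => mul_le_mul_of_nonneg_left (hg i) (hw i)
    _ = M := by rw [← sum_mul, hw1, one_mul]

theorem eq_of_weighted_sum_eq (hw : ∀ i, 0 ≤ w i) (hw1 : ∑ i, w i = 1) (hg : ∀ i, g i ≤ M)
    (hsum : ∑ i, w i * g i = M) {i : ι} (hi : 0 < w i) : g i = M := by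
  have hgap : ∑ j, w j * (M - g j) = 0 := by
    simp only [mul_sub, sum_sub_distrib, ← sum_mul, hw1, one_mul, hsum, sub_self]
  have hgap_i : w i * (M - g i) = 0 :=
    (sum_eq_zero_iff_of_nonneg fun j _ => mul_nonneg (hw j) (sub_nonneg.mpr (hg j))).mp
      hgap i (mem_univ i)
  have := (mul_eq_zero.mp hgap_i).resolve_left hi.ne'
  linarith

end WeightedAverage

theorem Fintype.sum_eq_sum_iff_of_le {ι M : Type*} [Fintype ι] [AddCommMonoid M]
    [PartialOrder M] [IsOrderedCancelAddMonoid M] {u v : ι → M} (h : ∀ i, u i ≤ v i) :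
    ∑ i, u i = ∑ i, v i ↔ ∀ i, u i = v i := by
  simpa using Finset.sum_eq_sum_iff_of_le (s := univ) fun i _ => h i

theorem stmt_7_general {X Y : Type*} [Fintype X] [Fintype Y] (d : ℕ)
    (p : X → Y → ℝ) (hp : ∀ x y, 0 ≤ p x y)
    (f : X → Y → Finset (Fin d) → ℝ)
    (π : X → Y → Finset (Fin d) → ℝ)
    (hπ : ∀ x y S, 0 ≤ π x y S) (hπsum : ∀ x y, ∑ S, π x y S = 1)
    (Sstar : X → Y → Finset (Fin d))
    (hSstar : ∀ x y S, f x y S ≤ f x y (Sstar x y))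
    (hopt : (∑ x, ∑ y, p x y * ∑ S, π x y S * f x y S) =
      ∑ x, ∑ y, p x y * f x y (Sstar x y)) :
    ∀ x y, 0 < p x y → ∀ S, 0 < π x y S → f x y S = f x y (Sstar x y) := by
  intro x y hpxy S hπS
  have hpointwise : ∀ xy : X × Y, p xy.1 xy.2 * ∑ S, π xy.1 xy.2 S * f xy.1 xy.2 S ≤
      p xy.1 xy.2 * f xy.1 xy.2 (Sstar xy.1 xy.2) := fun ⟨x, y⟩ =>
    mul_le_mul_of_nonneg_left (weighted_sum_le_of_le (hπ x y) (hπsum x y) (hSstar x y)) (hp x y)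
  rw [← Fintype.sum_prod_type', ← Fintype.sum_prod_type'] at hopt
  have hxy := (Fintype.sum_eq_sum_iff_of_le hpointwise).mp hopt (x, y)
  exact eq_of_weighted_sum_eq (hπ x y) (hπsum x y) (hSstar x y)
    (mul_left_cancel₀ hpxy.ne' hxy) hπS

/-- Converse of optimality: any selection rule achieving the global maximum must,
with probability one, put all its mass on the pointwise maximizers `S*`. -/
theorem stmt_7 {X Y : Type*} [Fintype X] [Fintype Y] (d : ℕ)
    (p : X → Y → ℝ) (hp : ∀ x y, 0 ≤ p x y) (hpsum : ∑ x, ∑ y, p x y = 1)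
    (f : X → Y → Finset (Fin d) → ℝ)
    (π : X → Y → Finset (Fin d) → ℝ)
    (hπ : ∀ x y S, 0 ≤ π x y S) (hπsum : ∀ x y, ∑ S, π x y S = 1)
    (Sstar : X → Y → Finset (Fin d))
    (hSstar : ∀ x y S, f x y S ≤ f x y (Sstar x y))
    (hopt : (∑ x, ∑ y, p x y * ∑ S, π x y S * f x y S) =
      ∑ x, ∑ y, p x y * f x y (Sstar x y)) :
    ∀ x y, 0 < p x y → ∀ S, 0 < π x y S → f x y S = f x y (Sstar x y) :=
  stmt_7_general d p hp f π hπ hπsum Sstar hSstar hopt
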